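/- arXiv:1403.4844 — 10 statements merged into one kernel-verified Lean document; each statement's English description precedes it below -/
import Mathlib

section
/- Let E be a complex Banach space and let T be a bounded linear operator on E with rich point spectrum. If λ ∈ ℂ is an extended eigenvalue of T, then λ · int σ_p(T) ⊆ clos σ_p(T), i.e., for every z in the interior of the point spectrum of T, the point λz lies in the closure of the point spectrum of T. -/
open Metric

/-- The point spectrum of a bounded linear operator. -/
def pointSpectrum {E : Type*} [NormedAddCommGroup E] [NormedSpace ℂ E]
    (T : E →L[ℂ] E) : Set ℂ :=
  {z : ℂ | ∃ f : E, f ≠ 0 ∧ T f = z • f}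

/-- An operator has rich point spectrum if the interior of its point spectrum is
nonempty and for every open disc contained in the point spectrum, the union of the
corresponding eigenspaces has dense linear span. -/
def HasRichPointSpectrum {E : Type*} [NormedAddCommGroup E] [NormedSpace ℂ E]
    (T : E →L[ℂ] E) : Prop :=
  (interior (pointSpectrum T)).Nonempty ∧
    ∀ (c : ℂ) (r : ℝ), 0 < r → Metric.ball c r ⊆ pointSpectrum T →
      Dense (↑(Submodule.span ℂ {f : E | ∃ z ∈ Metric.ball c r, T f = z • f}) : Set E)

theorem stmt0 {E : Type*} [NormedAddCommGroup E] [NormedSpace ℂ E] [CompleteSpace E]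
    (T : E →L[ℂ] E) (hT : HasRichPointSpectrum T) (l : ℂ)
    (hl : ∃ X : E →L[ℂ] E, X ≠ 0 ∧ T.comp X = l • (X.comp T)) :
    ∀ z ∈ interior (pointSpectrum T), l * z ∈ closure (pointSpectrum T) := by
  intro z hz
  by_contra hlz
  obtain ⟨X, hX0, hX⟩ := hl
  -- the set of w with l * w outside the closure is open and contains z
  have hopen : IsOpen ({w : ℂ | l * w ∈ (closure (pointSpectrum T))ᶜ} ∩
      interior (pointSpectrum T)) := by
    apply IsOpen.inter _ isOpen_interior
    exact (isClosed_closure.isOpen_compl).preimage (continuous_const.mul continuous_id)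
  have hzmem : z ∈ {w : ℂ | l * w ∈ (closure (pointSpectrum T))ᶜ} ∩
      interior (pointSpectrum T) := ⟨hlz, hz⟩
  obtain ⟨r, hr, hball⟩ := Metric.isOpen_iff.mp hopen z hzmem
  have hball1 : Metric.ball z r ⊆ pointSpectrum T := fun w hw =>
    interior_subset (hball hw).2
  have hdense := hT.2 z r hr hball1
  -- X vanishes on the eigenvectors
  have hvanish : ∀ f ∈ {f : E | ∃ w ∈ Metric.ball z r, T f = w • f}, X f = 0 := by
    rintro f ⟨w, hw, hf⟩
    by_contra hXf
    have hTXf : T (X f) = (l * w) • X f := by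
      have := congrArg (fun S : E →L[ℂ] E => S f) hX
      simp only [ContinuousLinearMap.comp_apply, ContinuousLinearMap.smul_apply] at this
      rw [this, hf, map_smul, smul_smul]
    have : l * w ∈ pointSpectrum T := ⟨X f, hXf, hTXf⟩
    exact (hball hw).1 (subset_closure this)
  have : X = 0 := by
    apply ContinuousLinearMap.ext_on hdense
    intro f hf
    simpa using hvanish f hf
  exact hX0 this
end

section
/- Let T be a bounded linear operator on a complex Banach space with rich point spectrum, and suppose that σ_p(T) = D(r, r) (the open disc with center r and radius r) for some r > 0. If λ ∈ ℂ is an extended eigenvalue of T, then λ is real and 0 < λ ≤ 1. -/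
/-!
An extended eigenoperator `X` for `λ` maps `ker (T - z)` into `ker (T - λ z)`. Since `X ≠ 0` and
the eigenvectors for `z` in any disc inside `σ_p(T)` span a dense subspace, every such disc
contains some `z` with `λ z ∈ σ_p(T)`. Hence `z ↦ λ z` maps a dense subset of `D(r, r)` into
`D(r, r)`, so by continuity it maps the closed disc `D̄(r, r)` into itself. The image is the closed
disc of center `λ r` and radius `|λ| r`, so `|λ| + |λ - 1| ≤ 1`, which puts `λ` on the segment
`[0, 1]`; and `λ ≠ 0` because `0 ∉ D(r, r)`.
-/

open Metric

open scoped Pointwise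

lemma subset_closure_of_forall_ball_inter_nonempty {α : Type*} [PseudoMetricSpace α]
    {s t : Set α} (hs : IsOpen s)
    (h : ∀ (c : α) (ε : ℝ), 0 < ε → ball c ε ⊆ s → (ball c ε ∩ t).Nonempty) :
    s ⊆ closure t := by
  intro x hx
  rw [Metric.mem_closure_iff]
  intro ε hε
  obtain ⟨δ, hδ, hδs⟩ := Metric.isOpen_iff.1 hs x hx
  obtain ⟨y, hy, hyt⟩ :=
    h x (min ε δ) (lt_min hε hδ) ((ball_subset_ball (min_le_right _ _)).trans hδs)
  exact ⟨y, hyt, (mem_ball'.1 hy).trans_le (min_le_left _ _)⟩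

lemma add_dist_le_of_closedBall_subset_closedBall {E : Type*} [NormedAddCommGroup E]
    [NormedSpace ℝ E] [Nontrivial E] {x y : E} {ε δ : ℝ} (hε : 0 ≤ ε)
    (h : closedBall x ε ⊆ closedBall y δ) : ε + dist x y ≤ δ := by
  obtain ⟨v, hv, hxy⟩ : ∃ v : E, ‖v‖ = 1 ∧ x - y = ‖x - y‖ • v := by
    by_cases hxy : x - y = 0
    · obtain ⟨v, hv⟩ := exists_norm_eq E zero_le_one
      exact ⟨v, hv, by simp [hxy]⟩
    · exact ⟨‖x - y‖⁻¹ • (x - y), norm_smul_inv_norm hxy,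
        by rw [smul_smul, mul_inv_cancel₀ (norm_ne_zero_iff.2 hxy), one_smul]⟩
  have hp : x + ε • v ∈ closedBall x ε := by
    simp [norm_smul, hv, abs_of_nonneg hε]
  have hpy : x + ε • v - y = (‖x - y‖ + ε) • v := by
    rw [add_smul, ← hxy]; abel
  have := mem_closedBall.1 (h hp)
  rwa [dist_eq_norm, hpy, norm_smul, hv, mul_one, Real.norm_of_nonneg (by positivity),
    add_comm, ← dist_eq_norm] at this

lemma Complex.im_eq_zero_and_re_mem_Icc_of_norm_add_norm_sub_one_le {l : ℂ}
    (h : ‖l‖ + ‖l - 1‖ ≤ 1) :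
    l.im = 0 ∧ l.re ∈ Set.Icc 0 1 := by
  have hre : l.re ≤ ‖l‖ := (le_abs_self _).trans (Complex.abs_re_le_norm l)
  have hre_sub : 1 - l.re ≤ ‖l - 1‖ := by
    have := Complex.abs_re_le_norm (l - 1)
    rw [Complex.sub_re, Complex.one_re] at this
    linarith [neg_abs_le (l.re - 1)]
  have hnorm : ‖l‖ = l.re := by linarith
  have hre0 : 0 ≤ l.re := hnorm ▸ norm_nonneg l
  refine ⟨Complex.abs_re_eq_norm.1 (by rw [hnorm, abs_of_nonneg hre0]), hre0, ?_⟩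
  linarith [norm_nonneg (l - 1)]

lemma Complex.norm_add_norm_sub_one_le_of_smul_closedBall_subset {l : ℂ} {r : ℝ} (hr : 0 < r)
    (h : l • closedBall (r : ℂ) r ⊆ closedBall (r : ℂ) r) : ‖l‖ + ‖l - 1‖ ≤ 1 := by
  rw [smul_closedBall l _ hr.le] at h
  have := add_dist_le_of_closedBall_subset_closedBall (by positivity) h
  rw [dist_eq_norm, smul_eq_mul, ← sub_one_mul, norm_mul, Complex.norm_real,
    Real.norm_of_nonneg hr.le] at this
  nlinarith

section ExtendedEigenoperator

variable {E : Type*} [NormedAddCommGroup E] [NormedSpace ℂ E] {T X : E →L[ℂ] E} {l : ℂ}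

lemma apply_eigenvector_of_comp_eq_smul_comp (hX : T.comp X = l • X.comp T) {z : ℂ} {f : E}
    (hf : T f = z • f) : T (X f) = (l * z) • X f := by
  simpa [hf, smul_smul] using DFunLike.congr_fun hX f

lemma HasRichPointSpectrum.exists_mem_ball_mul_mem_pointSpectrum (hT : HasRichPointSpectrum T)
    (hX0 : X ≠ 0) (hX : T.comp X = l • X.comp T) {c : ℂ} {ε : ℝ} (hε : 0 < ε)
    (hsub : ball c ε ⊆ pointSpectrum T) : ∃ z ∈ ball c ε, l * z ∈ pointSpectrum T := by
  by_contra! h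
  refine hX0 (ContinuousLinearMap.ext_on (hT.2 c ε hε hsub) ?_)
  rintro f ⟨z, hz, hfz⟩
  by_contra hXf
  exact h z hz ⟨X f, hXf, apply_eigenvector_of_comp_eq_smul_comp hX hfz⟩

end ExtendedEigenoperator

theorem stmt1_general {E : Type*} [NormedAddCommGroup E] [NormedSpace ℂ E]
    (T : E →L[ℂ] E) (hT : HasRichPointSpectrum T) (r : ℝ) (hr : 0 < r)
    (hσ : pointSpectrum T = Metric.ball (r : ℂ) r) (l : ℂ)
    (hl : ∃ X : E →L[ℂ] E, X ≠ 0 ∧ T.comp X = l • (X.comp T)) :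
    l.im = 0 ∧ 0 < l.re ∧ l.re ≤ 1 := by
  obtain ⟨X, hX0, hX⟩ := hl
  have hmeet : ∀ (c : ℂ) (ε : ℝ), 0 < ε → ball c ε ⊆ ball (r : ℂ) r →
      (ball c ε ∩ (l * ·) ⁻¹' ball (r : ℂ) r).Nonempty := by
    intro c ε hε hsub
    rw [← hσ] at hsub ⊢
    exact hT.exists_mem_ball_mul_mem_pointSpectrum hX0 hX hε hsub
  have hl0 : l ≠ 0 := by
    rintro rfl
    obtain ⟨z, -, hz⟩ := hmeet r r hr subset_rfl
    simp [abs_of_pos hr] at hz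
  have hmaps : l • closedBall (r : ℂ) r ⊆ closedBall (r : ℂ) r := by
    rw [Set.smul_set_subset_iff, ← closure_ball _ hr.ne']
    intro z hz
    exact (continuous_const_mul l).closure_preimage_subset _
      (closure_minimal (subset_closure_of_forall_ball_inter_nonempty isOpen_ball hmeet)
        isClosed_closure hz)
  obtain ⟨him, hre0, hre1⟩ := Complex.im_eq_zero_and_re_mem_Icc_of_norm_add_norm_sub_one_le
    (Complex.norm_add_norm_sub_one_le_of_smul_closedBall_subset hr hmaps)
  exact ⟨him, lt_of_le_of_ne hre0 fun h => hl0 (Complex.ext h.symm him), hre1⟩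

theorem stmt1 {E : Type*} [NormedAddCommGroup E] [NormedSpace ℂ E] [CompleteSpace E]
    (T : E →L[ℂ] E) (hT : HasRichPointSpectrum T) (r : ℝ) (hr : 0 < r)
    (hσ : pointSpectrum T = Metric.ball (r : ℂ) r) (l : ℂ)
    (hl : ∃ X : E →L[ℂ] E, X ≠ 0 ∧ T.comp X = l • (X.comp T)) :
    l.im = 0 ∧ 0 < l.re ∧ l.re ≤ 1 :=
  stmt1_general T hT r hr hσ l hl
end

section
/- Let T and S be bounded linear operators on a complex Banach space E, and suppose there exists a nonzero bounded linear operator X on E with X∘T = S∘X. If T has rich point spectrum, then int σ_p(T) ⊆ clos σ_p(S), i.e., the interior of the point spectrum of T is contained in the closure of the point spectrum of S. -/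
/-! An intertwiner `X` carries each eigenvector of `T` for the eigenvalue `w` either to `0` or to
an eigenvector of `S` for `w`. If `z ∈ int σ_p(T)` had a disc `D ∋ z` disjoint from `σ_p(S)`,
then `X` would kill every eigenvector of `T` with eigenvalue in `D`; by richness these span a
dense subspace, so `X = 0`. -/

open Metric

theorem Metric.exists_ball_subset_disjoint_of_mem_interior_of_notMem_closure {α : Type*}
    [PseudoMetricSpace α] {A B : Set α} {z : α} (hzA : z ∈ interior A) (hzB : z ∉ closure B) :
    ∃ r > 0, ball z r ⊆ A ∧ Disjoint (ball z r) B := by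
  obtain ⟨r, hr, hball⟩ :=
    isOpen_iff.mp (isOpen_interior.inter isClosed_closure.isOpen_compl) z ⟨hzA, hzB⟩
  refine ⟨r, hr, fun w hw => interior_subset (hball hw).1, ?_⟩
  exact Set.subset_compl_iff_disjoint_right.mp
    ((hball.trans Set.inter_subset_right).trans (Set.compl_subset_compl.mpr subset_closure))

section Intertwining

variable {E F : Type*} [NormedAddCommGroup E] [NormedSpace ℂ E]
  [NormedAddCommGroup F] [NormedSpace ℂ F]

theorem apply_eq_zero_of_intertwining_of_notMem_pointSpectrum {T : E →L[ℂ] E} {S : F →L[ℂ] F}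
    {X : E →L[ℂ] F} (hXTS : X.comp T = S.comp X) {w : ℂ} (hw : w ∉ pointSpectrum S) {f : E}
    (hf : T f = w • f) : X f = 0 := by
  by_contra hXf
  refine hw ⟨X f, hXf, ?_⟩
  rw [← ContinuousLinearMap.comp_apply, ← hXTS, ContinuousLinearMap.comp_apply, hf, map_smul]

theorem HasRichPointSpectrum.eq_zero_of_intertwining_of_disjoint {T : E →L[ℂ] E}
    (hT : HasRichPointSpectrum T) {S : F →L[ℂ] F} {X : E →L[ℂ] F}
    (hXTS : X.comp T = S.comp X) {c : ℂ} {r : ℝ} (hr : 0 < r)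
    (hball : ball c r ⊆ pointSpectrum T) (hdisj : Disjoint (ball c r) (pointSpectrum S)) :
    X = 0 := by
  refine ContinuousLinearMap.ext_on (hT.2 c r hr hball) ?_
  rintro f ⟨w, hw, hf⟩
  exact apply_eq_zero_of_intertwining_of_notMem_pointSpectrum hXTS
    (Set.disjoint_left.mp hdisj hw) hf

end Intertwining

theorem stmt4_general {E : Type*} [NormedAddCommGroup E] [NormedSpace ℂ E]
    (T S : E →L[ℂ] E) (hT : HasRichPointSpectrum T)
    (X : E →L[ℂ] E) (hX : X ≠ 0) (hXTS : X.comp T = S.comp X) :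
    interior (pointSpectrum T) ⊆ closure (pointSpectrum S) := by
  intro z hzT
  by_contra hzS
  obtain ⟨r, hr, hball, hdisj⟩ := exists_ball_subset_disjoint_of_mem_interior_of_notMem_closure hzT hzS
  exact hX (hT.eq_zero_of_intertwining_of_disjoint hXTS hr hball hdisj)

theorem stmt4 {E : Type*} [NormedAddCommGroup E] [NormedSpace ℂ E] [CompleteSpace E]
    (T S : E →L[ℂ] E) (hT : HasRichPointSpectrum T)
    (X : E →L[ℂ] E) (hX : X ≠ 0) (hXTS : X.comp T = S.comp X) :
    interior (pointSpectrum T) ⊆ closure (pointSpectrum S) :=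
  stmt4_general T S hT X hX hXTS
end

section
/- Let 1 < p < ∞ and let 0 < λ ≤ 1 be real. Let C₁ be a bounded linear operator on L^p[0,1] (complex-valued) satisfying (C₁f)(x) = (1/x)∫₀ˣ f(t) dt for almost every x ∈ [0,1] and every f ∈ L^p[0,1]. Then there exists a nonzero bounded linear operator X₀ on L^p[0,1] with operator norm ‖X₀‖ ≤ λ^{1/p} such that (X₀f)(x) = x^{(1−λ)/λ} f(x^{1/λ}) for almost every x ∈ [0,1] and every f ∈ L^p[0,1], and C₁∘X₀ = λ·(X₀∘C₁). In particular, λ is an extended eigenvalue of C₁. -/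
open MeasureTheory Set
open scoped ENNReal

/-! Write `X₀ f (x) = x^((1-l)/l) f(x^(1/l))`. Substituting `x = u^l`, the Jacobian `l u^(l-1)`
cancels the weight `u^(1-l)`, so `∫₀ˣ X₀ f = l ∫₀^(x^(1/l)) f`; dividing by `x` gives
`C₁ X₀ = l X₀ C₁` pointwise. The same substitution gives
`‖X₀ f‖ₚᵖ = l ∫₀¹ u^((1-l)(p-1)) |f u|ᵖ du ≤ l ‖f‖ₚᵖ`, as `(1-l)(p-1) ≥ 0`. -/

section RpowSubstitution

variable {l a : ℝ}

lemma image_rpow_Ioc (hl : 0 < l) (ha : 0 ≤ a) :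
    (fun u : ℝ => u ^ l) '' Ioc 0 a = Ioc 0 (a ^ l) := by
  ext y
  constructor
  · rintro ⟨u, ⟨hu0, hua⟩, rfl⟩
    exact ⟨Real.rpow_pos_of_pos hu0 l, Real.rpow_le_rpow hu0.le hua hl.le⟩
  · rintro ⟨hy0, hya⟩
    refine ⟨y ^ l⁻¹, ⟨Real.rpow_pos_of_pos hy0 _, ?_⟩, Real.rpow_inv_rpow hy0.le hl.ne'⟩
    calc y ^ l⁻¹ ≤ (a ^ l) ^ l⁻¹ := Real.rpow_le_rpow hy0.le hya (inv_nonneg.2 hl.le)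
      _ = a := Real.rpow_rpow_inv ha hl.ne'

lemma injOn_rpow_Ioc (hl : 0 < l) : InjOn (fun u : ℝ => u ^ l) (Ioc 0 a) :=
  (Real.rpow_left_injOn hl.ne').mono fun _ hu => hu.1.le

lemma hasDerivWithinAt_rpow_Ioc {u : ℝ} (hu : u ∈ Ioc 0 a) :
    HasDerivWithinAt (fun u : ℝ => u ^ l) (l * u ^ (l - 1)) (Ioc 0 a) u :=
  (Real.hasDerivAt_rpow_const (Or.inl hu.1.ne')).hasDerivWithinAt

lemma lintegral_Ioc_rpow_substitution (hl : 0 < l) (ha : 0 ≤ a) (g : ℝ → ℝ≥0∞) :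
    ∫⁻ x in Ioc 0 (a ^ l), g x =
      ∫⁻ u in Ioc 0 a, ENNReal.ofReal (l * u ^ (l - 1)) * g (u ^ l) := by
  rw [← image_rpow_Ioc hl ha, lintegral_image_eq_lintegral_abs_deriv_mul measurableSet_Ioc
    (fun _ hu => hasDerivWithinAt_rpow_Ioc hu) (injOn_rpow_Ioc hl)]
  refine setLIntegral_congr_fun measurableSet_Ioc fun u hu => ?_
  rw [abs_of_nonneg (by have := hu.1; positivity)]

lemma integral_Ioc_rpow_substitution {E : Type*} [NormedAddCommGroup E] [NormedSpace ℝ E]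
    (hl : 0 < l) (ha : 0 ≤ a) (g : ℝ → E) :
    ∫ x in Ioc 0 (a ^ l), g x = ∫ u in Ioc 0 a, (l * u ^ (l - 1)) • g (u ^ l) := by
  rw [← image_rpow_Ioc hl ha, integral_image_eq_integral_abs_deriv_smul measurableSet_Ioc
    (fun _ hu => hasDerivWithinAt_rpow_Ioc hu) (injOn_rpow_Ioc hl)]
  refine setIntegral_congr_fun measurableSet_Ioc fun u hu => ?_
  rw [abs_of_nonneg (by have := hu.1; positivity)]

end RpowSubstitution

local notation "μ" => volume.restrict (Icc (0 : ℝ) 1)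

lemma quasiMeasurePreserving_rpow_Icc {r : ℝ} (hr : 0 < r) :
    Measure.QuasiMeasurePreserving (fun x : ℝ => x ^ r) μ μ := by
  have hmeas : Measurable fun x : ℝ => x ^ r := measurable_id.pow_const r
  refine ⟨hmeas, Measure.AbsolutelyContinuous.mk fun s hs hs0 => ?_⟩
  rw [Measure.map_apply hmeas hs, Measure.restrict_apply (hmeas hs)]
  rw [Measure.restrict_apply hs] at hs0
  -- Away from `0`, the pullback of `s` lies in the image of `s ∩ (0, 1]` under the map
  -- `u ↦ u ^ r⁻¹`, differentiable there, and such images of null sets are null.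
  have hsub : (fun x : ℝ => x ^ r) ⁻¹' s ∩ Icc 0 1 ⊆
      {0} ∪ (fun u : ℝ => u ^ r⁻¹) '' (s ∩ Ioc 0 1) := by
    rintro x ⟨hxs, hx0, hx1⟩
    rcases hx0.eq_or_lt with rfl | hx0
    · exact Or.inl rfl
    · exact Or.inr ⟨x ^ r, ⟨hxs, Real.rpow_pos_of_pos hx0 r, Real.rpow_le_one hx0.le hx1 hr.le⟩,
        Real.rpow_rpow_inv hx0.le hr.ne'⟩
  refine measure_mono_null hsub (measure_union_null (measure_singleton 0) ?_)
  refine addHaar_image_eq_zero_of_differentiableOn_of_addHaar_eq_zero volume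
    (fun u hu => ?_) (measure_mono_null (inter_subset_inter_right s Ioc_subset_Icc_self) hs0)
  exact (Real.hasDerivAt_rpow_const (Or.inl hu.2.1.ne')).differentiableAt.differentiableWithinAt

lemma ae_mem_Ioc_zero_one : ∀ᵐ x ∂μ, x ∈ Ioc (0 : ℝ) 1 := by
  rw [← restrict_Ioc_eq_restrict_Icc]
  exact ae_restrict_mem measurableSet_Ioc

noncomputable def powerComp (l : ℝ) (g : ℝ → ℂ) (x : ℝ) : ℂ :=
  ((x ^ ((1 - l) / l) : ℝ) : ℂ) * g (x ^ (1 / l))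

noncomputable def cesaroMean (g : ℝ → ℂ) (x : ℝ) : ℂ :=
  (x : ℂ)⁻¹ * ∫ t in Ioc 0 x, g t

section PowerComp

variable {l : ℝ}

lemma powerComp_rpow (hl : 0 < l) (g : ℝ → ℂ) {u : ℝ} (hu : 0 ≤ u) :
    powerComp l g (u ^ l) = ((u ^ (1 - l) : ℝ) : ℂ) * g u := by
  rw [powerComp, ← Real.rpow_mul hu, ← Real.rpow_mul hu, mul_div_cancel₀ _ hl.ne',
    mul_one_div_cancel hl.ne', Real.rpow_one]

lemma integral_Ioc_powerComp (hl : 0 < l) (g : ℝ → ℂ) {x : ℝ} (hx : 0 ≤ x) :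
    ∫ t in Ioc 0 x, powerComp l g t = l * ∫ u in Ioc 0 (x ^ (1 / l)), g u := by
  have hx' : (x ^ (1 / l)) ^ l = x := by
    rw [one_div, Real.rpow_inv_rpow hx hl.ne']
  rw [← integral_const_mul]
  conv_lhs => rw [← hx']
  rw [integral_Ioc_rpow_substitution hl (by positivity)]
  refine setIntegral_congr_fun measurableSet_Ioc fun u hu => ?_
  have hweight : u ^ (l - 1) * u ^ (1 - l) = 1 := by
    rw [← Real.rpow_add hu.1, sub_add_sub_cancel', sub_self, Real.rpow_zero]
  rw [powerComp_rpow hl g hu.1.le, Complex.real_smul, ← mul_assoc, ← Complex.ofReal_mul,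
    mul_assoc, hweight, mul_one]

lemma cesaroMean_powerComp (hl : 0 < l) (g : ℝ → ℂ) {x : ℝ} (hx : 0 < x) :
    cesaroMean (powerComp l g) x = l * powerComp l (cesaroMean g) x := by
  have hpow : x ^ ((1 - l) / l) * (x ^ (1 / l))⁻¹ = x⁻¹ := by
    rw [← Real.rpow_neg hx.le, ← Real.rpow_add hx, ← Real.rpow_neg_one]
    congr 1
    field_simp
    ring
  rw [cesaroMean, integral_Ioc_powerComp hl g hx.le, powerComp, cesaroMean,
    ← Complex.ofReal_inv, ← hpow]
  push_cast
  ring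

lemma cesaroMean_eq_of_ae_eq {g g' : ℝ → ℂ} (h : g =ᵐ[μ] g') {x : ℝ} (hx : x ≤ 1) :
    cesaroMean g x = cesaroMean g' x :=
  congrArg _ (integral_congr_ae (ae_restrict_of_ae_restrict_of_subset
    (Ioc_subset_Icc_self.trans (Icc_subset_Icc_right hx)) h))

lemma powerComp_congr_ae (hl : 0 < l) {g g' : ℝ → ℂ} (h : g =ᵐ[μ] g') :
    powerComp l g =ᵐ[μ] powerComp l g' := by
  filter_upwards [(quasiMeasurePreserving_rpow_Icc (one_div_pos.2 hl)).ae_eq_comp h] with x hx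
  rw [powerComp, powerComp]
  exact congrArg _ hx

lemma aestronglyMeasurable_powerComp (hl : 0 < l) {g : ℝ → ℂ} (hg : AEStronglyMeasurable g μ) :
    AEStronglyMeasurable (powerComp l g) μ :=
  (Complex.measurable_ofReal.comp (measurable_id.pow_const _)).aestronglyMeasurable.mul
    (hg.comp_quasiMeasurePreserving (quasiMeasurePreserving_rpow_Icc (one_div_pos.2 hl)))

variable {p : ℝ}

lemma rpow_weight_le {u : ℝ} (hl1 : l ≤ 1) (hp : 1 ≤ p) (hu : u ∈ Ioc 0 1) :
    u ^ (l - 1) * (u ^ (1 - l)) ^ p ≤ 1 := by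
  rw [← Real.rpow_mul hu.1.le, ← Real.rpow_add hu.1]
  exact Real.rpow_le_one hu.1.le hu.2 (by nlinarith)

lemma lintegral_powerComp_le (hl0 : 0 < l) (hl1 : l ≤ 1) (hp : 1 ≤ p) (g : ℝ → ℂ) :
    ∫⁻ x in Icc 0 1, ‖powerComp l g x‖ₑ ^ p ≤ ENNReal.ofReal l * ∫⁻ x in Icc 0 1, ‖g x‖ₑ ^ p := by
  rw [← restrict_Ioc_eq_restrict_Icc, ← lintegral_const_mul' _ _ ENNReal.ofReal_ne_top]
  conv_lhs => rw [← Real.one_rpow l, lintegral_Ioc_rpow_substitution hl0 zero_le_one]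
  refine setLIntegral_mono' measurableSet_Ioc fun u hu => ?_
  have hw : 0 ≤ u ^ (1 - l) := Real.rpow_nonneg hu.1.le _
  rw [powerComp_rpow hl0 g hu.1.le, enorm_mul, ← ofReal_norm, Complex.norm_real,
    Real.norm_of_nonneg hw, ENNReal.mul_rpow_of_nonneg _ _ (by linarith),
    ENNReal.ofReal_rpow_of_nonneg hw (by linarith), ← mul_assoc,
    ← ENNReal.ofReal_mul (by have := hu.1; positivity)]
  gcongr
  rw [mul_assoc]
  exact mul_le_of_le_one_right hl0.le (rpow_weight_le hl1 hp hu)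

end PowerComp

section PowerCompLp

variable {l p : ℝ}

lemma eLpNorm_powerComp_le (hl0 : 0 < l) (hl1 : l ≤ 1) (hp : 1 ≤ p) (g : ℝ → ℂ) :
    eLpNorm (powerComp l g) (ENNReal.ofReal p) μ ≤
      ENNReal.ofReal l ^ (1 / p) * eLpNorm g (ENNReal.ofReal p) μ := by
  have hp0 : ENNReal.ofReal p ≠ 0 := by positivity
  rw [eLpNorm_eq_lintegral_rpow_enorm_toReal hp0 ENNReal.ofReal_ne_top,
    eLpNorm_eq_lintegral_rpow_enorm_toReal hp0 ENNReal.ofReal_ne_top,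
    ENNReal.toReal_ofReal (by linarith), ← ENNReal.mul_rpow_of_nonneg _ _ (by positivity)]
  exact ENNReal.rpow_le_rpow (lintegral_powerComp_le hl0 hl1 hp g) (by positivity)

lemma memLp_powerComp (hl0 : 0 < l) (hl1 : l ≤ 1) (hp : 1 ≤ p) {g : ℝ → ℂ}
    (hg : MemLp g (ENNReal.ofReal p) μ) : MemLp (powerComp l g) (ENNReal.ofReal p) μ :=
  ⟨aestronglyMeasurable_powerComp hl0 hg.1, (eLpNorm_powerComp_le hl0 hl1 hp g).trans_lt
    (ENNReal.mul_lt_top (ENNReal.rpow_lt_top_of_nonneg (by positivity) ENNReal.ofReal_ne_top)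
      hg.2)⟩

variable (p) [Fact (1 ≤ ENNReal.ofReal p)]

lemma one_le_of_fact_one_le_ofReal : 1 ≤ p := ENNReal.one_le_ofReal.1 Fact.out

noncomputable def powerCompₗ (hl0 : 0 < l) (hl1 : l ≤ 1) :
    Lp ℂ (ENNReal.ofReal p) μ →ₗ[ℂ] Lp ℂ (ENNReal.ofReal p) μ where
  toFun f := (memLp_powerComp hl0 hl1 (one_le_of_fact_one_le_ofReal p) (Lp.memLp f)).toLp _
  map_add' f g := by
    rw [← MemLp.toLp_add]
    refine MemLp.toLp_congr _ _ ((powerComp_congr_ae hl0 (Lp.coeFn_add f g)).trans ?_)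
    exact .of_forall fun x => mul_add _ _ _
  map_smul' c f := by
    rw [RingHom.id_apply, ← MemLp.toLp_const_smul]
    refine MemLp.toLp_congr _ _ ((powerComp_congr_ae hl0 (Lp.coeFn_smul c f)).trans ?_)
    exact .of_forall fun x => mul_left_comm _ _ _

lemma coeFn_powerCompₗ (hl0 : 0 < l) (hl1 : l ≤ 1) (f : Lp ℂ (ENNReal.ofReal p) μ) :
    powerCompₗ p hl0 hl1 f =ᵐ[μ] powerComp l f :=
  MemLp.coeFn_toLp (memLp_powerComp hl0 hl1 (one_le_of_fact_one_le_ofReal p) (Lp.memLp f))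

lemma norm_powerCompₗ_le (hl0 : 0 < l) (hl1 : l ≤ 1) (f : Lp ℂ (ENNReal.ofReal p) μ) :
    ‖powerCompₗ p hl0 hl1 f‖ ≤ l ^ (1 / p) * ‖f‖ := by
  have hbound := eLpNorm_powerComp_le hl0 hl1 (one_le_of_fact_one_le_ofReal p) f
  have hconst : l ^ (1 / p) = (ENNReal.ofReal l ^ (1 / p)).toReal := by
    rw [← ENNReal.toReal_rpow, ENNReal.toReal_ofReal hl0.le]
  rw [Lp.norm_def, Lp.norm_def, eLpNorm_congr_ae (coeFn_powerCompₗ p hl0 hl1 f), hconst,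
    ← ENNReal.toReal_mul]
  exact ENNReal.toReal_mono (ENNReal.mul_ne_top (by finiteness) (Lp.eLpNorm_ne_top f)) hbound

noncomputable def powerCompLp (hl0 : 0 < l) (hl1 : l ≤ 1) :
    Lp ℂ (ENNReal.ofReal p) μ →L[ℂ] Lp ℂ (ENNReal.ofReal p) μ :=
  (powerCompₗ p hl0 hl1).mkContinuous (l ^ (1 / p)) (norm_powerCompₗ_le p hl0 hl1)

variable (hl0 : 0 < l) (hl1 : l ≤ 1)

lemma coeFn_powerCompLp (f : Lp ℂ (ENNReal.ofReal p) μ) :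
    powerCompLp p hl0 hl1 f =ᵐ[μ] powerComp l f :=
  coeFn_powerCompₗ p hl0 hl1 f

lemma norm_powerCompLp_le : ‖powerCompLp p hl0 hl1‖ ≤ l ^ (1 / p) :=
  LinearMap.mkContinuous_norm_le _ (by positivity) _

lemma powerCompLp_ne_zero : powerCompLp p hl0 hl1 ≠ 0 := by
  intro h
  have hzero : powerComp l (Lp.const (ENNReal.ofReal p) μ (1 : ℂ)) =ᵐ[μ] 0 :=
    (coeFn_powerCompLp p hl0 hl1 _).symm.trans (by rw [h]; exact Lp.coeFn_zero _ _ _)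
  have hconst := powerComp_congr_ae hl0 (Lp.coeFn_const (ENNReal.ofReal p) μ (1 : ℂ))
  have hfalse : ∀ᵐ _ ∂μ, False := by
    filter_upwards [hzero, hconst, ae_mem_Ioc_zero_one] with x hx0 hx1 hx
    rw [hx1, powerComp, Function.const_apply, mul_one, Pi.zero_apply,
      Complex.ofReal_eq_zero] at hx0
    exact (Real.rpow_pos_of_pos hx.1 _).ne' hx0
  rw [Filter.eventually_false_iff_eq_bot, ae_eq_bot, Measure.restrict_eq_zero] at hfalse
  simp at hfalse

lemma comp_powerCompLp_of_cesaroMean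
    (C : Lp ℂ (ENNReal.ofReal p) μ →L[ℂ] Lp ℂ (ENNReal.ofReal p) μ)
    (hC : ∀ f, C f =ᵐ[μ] cesaroMean f) :
    C.comp (powerCompLp p hl0 hl1) = (l : ℂ) • (powerCompLp p hl0 hl1).comp C := by
  ext1 f
  refine Lp.ext ?_
  have hleft : C (powerCompLp p hl0 hl1 f) =ᵐ[μ] cesaroMean (powerComp l f) := by
    filter_upwards [hC (powerCompLp p hl0 hl1 f), ae_mem_Ioc_zero_one] with x hx hxI
    exact hx.trans (cesaroMean_eq_of_ae_eq (coeFn_powerCompLp p hl0 hl1 f) hxI.2)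
  have hright : powerCompLp p hl0 hl1 (C f) =ᵐ[μ] powerComp l (cesaroMean f) :=
    (coeFn_powerCompLp p hl0 hl1 (C f)).trans (powerComp_congr_ae hl0 (hC f))
  filter_upwards [hleft, hright, Lp.coeFn_smul (l : ℂ) (powerCompLp p hl0 hl1 (C f)),
    ae_mem_Ioc_zero_one] with x hxl hxr hxs hxI
  rw [ContinuousLinearMap.comp_apply, hxl, smul_apply, ContinuousLinearMap.comp_apply, hxs,
    Pi.smul_apply, hxr, cesaroMean_powerComp hl0 f hxI.1, smul_eq_mul]

end PowerCompLp

theorem stmt5_general (p : ℝ) [Fact (1 ≤ ENNReal.ofReal p)]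
    (l : ℝ) (hl0 : 0 < l) (hl1 : l ≤ 1)
    (C₁ : Lp ℂ (ENNReal.ofReal p) (volume.restrict (Set.Icc (0:ℝ) 1)) →L[ℂ]
          Lp ℂ (ENNReal.ofReal p) (volume.restrict (Set.Icc (0:ℝ) 1)))
    (hC₁ : ∀ f, ∀ᵐ (x : ℝ) ∂(volume.restrict (Set.Icc (0:ℝ) 1)),
      (C₁ f : ℝ → ℂ) x = (x : ℂ)⁻¹ * ∫ t in Set.Ioc (0:ℝ) x, (f : ℝ → ℂ) t) :
    ∃ X₀ : Lp ℂ (ENNReal.ofReal p) (volume.restrict (Set.Icc (0:ℝ) 1)) →L[ℂ]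
           Lp ℂ (ENNReal.ofReal p) (volume.restrict (Set.Icc (0:ℝ) 1)),
      X₀ ≠ 0 ∧ ‖X₀‖ ≤ l ^ (1/p) ∧
      (∀ f, ∀ᵐ (x : ℝ) ∂(volume.restrict (Set.Icc (0:ℝ) 1)),
        (X₀ f : ℝ → ℂ) x = ((x ^ ((1 - l)/l) : ℝ) : ℂ) * (f : ℝ → ℂ) (x ^ (1/l))) ∧
      C₁.comp X₀ = (l : ℂ) • (X₀.comp C₁) :=
  ⟨powerCompLp p hl0 hl1, powerCompLp_ne_zero p hl0 hl1, norm_powerCompLp_le p hl0 hl1,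
    coeFn_powerCompLp p hl0 hl1, comp_powerCompLp_of_cesaroMean p hl0 hl1 C₁ hC₁⟩

theorem stmt5 (p : ℝ) (hp : 1 < p) [Fact (1 ≤ ENNReal.ofReal p)]
    (l : ℝ) (hl0 : 0 < l) (hl1 : l ≤ 1)
    (C₁ : Lp ℂ (ENNReal.ofReal p) (volume.restrict (Set.Icc (0:ℝ) 1)) →L[ℂ]
          Lp ℂ (ENNReal.ofReal p) (volume.restrict (Set.Icc (0:ℝ) 1)))
    (hC₁ : ∀ f, ∀ᵐ (x : ℝ) ∂(volume.restrict (Set.Icc (0:ℝ) 1)),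
      (C₁ f : ℝ → ℂ) x = (x : ℂ)⁻¹ * ∫ t in Set.Ioc (0:ℝ) x, (f : ℝ → ℂ) t) :
    ∃ X₀ : Lp ℂ (ENNReal.ofReal p) (volume.restrict (Set.Icc (0:ℝ) 1)) →L[ℂ]
           Lp ℂ (ENNReal.ofReal p) (volume.restrict (Set.Icc (0:ℝ) 1)),
      X₀ ≠ 0 ∧ ‖X₀‖ ≤ l ^ (1/p) ∧
      (∀ f, ∀ᵐ (x : ℝ) ∂(volume.restrict (Set.Icc (0:ℝ) 1)),
        (X₀ f : ℝ → ℂ) x = ((x ^ ((1 - l)/l) : ℝ) : ℂ) * (f : ℝ → ℂ) (x ^ (1/l))) ∧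
      C₁.comp X₀ = (l : ℂ) • (X₀.comp C₁) :=
  stmt5_general p l hl0 hl1 C₁ hC₁
end

section
/- Let 0 < λ ≤ 1 be real, let B be the backward shift on ℓ²(ℕ, ℂ) given by (Bf)(n) = f(n+1), and let E_λ be a bounded linear operator on ℓ²(ℕ, ℂ) satisfying (E_λ f)(n) = Σ_{k=0}^{n} C(n,k) λ^k (1−λ)^{n−k} f(k) for all f ∈ ℓ² and all n ∈ ℕ. Then E_λ ≠ 0 and (I − B)∘E_λ = λ·(E_λ∘(I − B)); that is, λ is an extended eigenvalue of I − B and the Euler operator E_λ is a corresponding extended eigenoperator. -/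
/-!
Write `M g n = ∑ₖ C(n,k) λᵏ (1-λ)ⁿ⁻ᵏ g k` for the binomial means, so that `(E f) n = M f n`.
Pascal's rule `C(n+1,k) = C(n,k) + C(n,k-1)` gives
`M g (n+1) = (1-λ) M g n + λ M (g ∘ succ) n`, hence
`M g n - M g (n+1) = λ M (g - g ∘ succ) n`: read coordinatewise this is `(I - B) E = λ E (I - B)`.
Finally `E ≠ 0` because `(E e₀) 0 = 1`.
-/

open Finset

section EulerMean

variable {R : Type*} [CommRing R]

def eulerMean (l : R) (g : ℕ → R) (n : ℕ) : R :=
  ∑ k ∈ range (n + 1), (n.choose k : R) * l ^ k * (1 - l) ^ (n - k) * g k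

theorem eulerMean_sub (l : R) (g h : ℕ → R) (n : ℕ) :
    eulerMean l (fun k => g k - h k) n = eulerMean l g n - eulerMean l h n := by
  simp only [eulerMean, mul_sub, sum_sub_distrib]

theorem eulerMean_succ (l : R) (g : ℕ → R) (n : ℕ) :
    eulerMean l g (n + 1) = (1 - l) * eulerMean l g n + l * eulerMean l (fun k => g (k + 1)) n := by
  have pascal := sum_choose_succ_mul (fun i j => l ^ i * (1 - l) ^ j * g i) n
  simp only [← mul_assoc] at pascal
  rw [eulerMean, pascal, eulerMean, eulerMean, mul_sum, mul_sum]
  congr 1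
  · refine sum_congr rfl fun k hk => ?_
    rw [Nat.succ_sub (Nat.lt_succ_iff.1 (mem_range.1 hk)), pow_succ]
    ring
  · exact sum_congr rfl fun k _ => by ring

theorem eulerMean_sub_eulerMean_succ (l : R) (g : ℕ → R) (n : ℕ) :
    eulerMean l g n - eulerMean l g (n + 1) = l * eulerMean l (fun k => g k - g (k + 1)) n := by
  rw [eulerMean_succ, eulerMean_sub]
  ring

end EulerMean

theorem coe_one_sub_of_apply_eq_succ
    {B : lp (fun _ : ℕ => ℂ) 2 →L[ℂ] lp (fun _ : ℕ => ℂ) 2} (hB : ∀ f (n : ℕ), B f n = f (n + 1))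
    (f : lp (fun _ : ℕ => ℂ) 2) : ⇑((1 - B) f) = fun n => f n - f (n + 1) := by
  ext n
  rw [sub_apply, lp.coeFn_sub, Pi.sub_apply, hB]
  rfl

theorem stmt11_general (l : ℝ)
    (B : lp (fun _ : ℕ => ℂ) 2 →L[ℂ] lp (fun _ : ℕ => ℂ) 2)
    (hB : ∀ f (n : ℕ), B f n = f (n+1))
    (E : lp (fun _ : ℕ => ℂ) 2 →L[ℂ] lp (fun _ : ℕ => ℂ) 2)
    (hE : ∀ f (n : ℕ), E f n = ∑ k ∈ Finset.range (n+1),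
      (n.choose k : ℂ) * (l:ℂ)^k * (1 - (l:ℂ))^(n-k) * f k) :
    E ≠ 0 ∧ (1 - B).comp E = (l : ℂ) • (E.comp (1 - B)) := by
  have hE_mean : ∀ f n, E f n = eulerMean (l : ℂ) f n := hE
  constructor
  · intro hE0
    simpa [hE0, eulerMean, lp.single_apply_self] using hE_mean (lp.single 2 0 1) 0
  · ext f n
    simp only [ContinuousLinearMap.comp_apply, smul_apply, lp.coeFn_smul, Pi.smul_apply,
      smul_eq_mul, coe_one_sub_of_apply_eq_succ hB, hE_mean, eulerMean_sub_eulerMean_succ]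

theorem stmt11 (l : ℝ) (hl0 : 0 < l) (hl1 : l ≤ 1)
    (B : lp (fun _ : ℕ => ℂ) 2 →L[ℂ] lp (fun _ : ℕ => ℂ) 2)
    (hB : ∀ f (n : ℕ), B f n = f (n+1))
    (E : lp (fun _ : ℕ => ℂ) 2 →L[ℂ] lp (fun _ : ℕ => ℂ) 2)
    (hE : ∀ f (n : ℕ), E f n = ∑ k ∈ Finset.range (n+1),
      (n.choose k : ℂ) * (l:ℂ)^k * (1 - (l:ℂ))^(n-k) * f k) :
    E ≠ 0 ∧ (1 - B).comp E = (l : ℂ) • (E.comp (1 - B)) :=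
  stmt11_general l B hB E hE
end

section
/- Let 0 < λ ≤ 1 be real, let B be the backward shift on ℓ²(ℕ, ℂ) given by (Bf)(n) = f(n+1), let (e_n) denote the standard orthonormal basis of ℓ²(ℕ, ℂ), and let E_λ be a bounded linear operator on ℓ²(ℕ, ℂ) satisfying (E_λ f)(n) = Σ_{k=0}^{n} C(n,k) λ^k (1−λ)^{n−k} f(k) for all f and n. If X is a nonzero bounded linear operator on ℓ²(ℕ, ℂ) with (I − B)∘X = λ·(X∘(I − B)), then there exist n₀ ∈ ℕ and a sequence of complex scalars (β_m)_{m∈ℕ} with β₀ ≠ 0 such that X e_n = 0 for all n < n₀ and X e_{n₀+m} = Σ_{j=0}^{m} β_{m−j} · (E_λ e_j) for all m ∈ ℕ. -/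
/-!
Read coordinatewise, `(1 - B) X = λ X (1 - B)` says `(X f)(k+1) = (1 - λ) (X f)(k) + λ (X B f)(k)`.
Let `n₀` be the first index with `X e_{n₀} ≠ 0`. Since `B e_{n+1} = e_n` and `X B e_{n₀} = 0`, the
vectors `x_m = X e_{n₀+m}` satisfy `x_m(k+1) = (1 - λ) x_m(k) + λ x_{m-1}(k)` with `x_{-1} = 0`.
The columns `E_λ e_j` satisfy the same recursion with initial values `e_j(0) = δ_{j0}`, so by
linearity `x_m = Σ_j x_{m-j}(0) E_λ e_j`. In particular `x_0 = x_0(0) E_λ e_0`, so `x_0(0) ≠ 0`.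
-/

open Finset

local notation "ℓ²" => lp (fun _ : ℕ => ℂ) 2

section EulerWeight

variable {R : Type*} [CommRing R] (c : R)

def eulerWeight (j n : ℕ) : R := n.choose j * c ^ j * (1 - c) ^ (n - j)

theorem eulerWeight_zero_right (j : ℕ) : eulerWeight c j 0 = if j = 0 then 1 else 0 := by
  cases j <;> simp [eulerWeight]

theorem eulerWeight_zero_succ (k : ℕ) :
    eulerWeight c 0 (k + 1) = (1 - c) * eulerWeight c 0 k := by
  simp [eulerWeight, pow_succ, mul_comm]

theorem eulerWeight_succ_succ (j k : ℕ) :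
    eulerWeight c (j + 1) (k + 1) = (1 - c) * eulerWeight c (j + 1) k + c * eulerWeight c j k := by
  rcases lt_trichotomy k j with h | rfl | h
  · simp [eulerWeight, Nat.choose_eq_zero_of_lt h, Nat.choose_eq_zero_of_lt (by omega : k < j + 1),
      Nat.choose_eq_zero_of_lt (by omega : k + 1 < j + 1)]
  · simp [eulerWeight, pow_succ, mul_comm]
  · obtain ⟨d, rfl⟩ := Nat.exists_eq_add_of_lt h
    simp only [eulerWeight, Nat.choose_succ_succ', Nat.cast_add,
      show j + d + 1 + 1 - (j + 1) = d + 1 by omega, show j + d + 1 - (j + 1) = d by omega,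
      show j + d + 1 - j = d + 1 by omega]
    ring

theorem eq_sum_mul_eulerWeight (x : ℕ → ℕ → R) (h₀ : ∀ k, x 0 (k + 1) = (1 - c) * x 0 k)
    (hsucc : ∀ m k, x (m + 1) (k + 1) = (1 - c) * x (m + 1) k + c * x m k) (m k : ℕ) :
    x m k = ∑ j ∈ range (m + 1), x (m - j) 0 * eulerWeight c j k := by
  induction k generalizing m with
  | zero => simp [eulerWeight_zero_right]
  | succ k ih =>
    cases m with
    | zero =>
      simp only [h₀, ih 0, eulerWeight_zero_succ, zero_add, range_one, sum_singleton]
      ring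
    | succ m =>
      rw [hsucc, ih, ih, sum_range_succ' _ (m + 1), sum_range_succ' _ (m + 1)]
      simp only [eulerWeight_succ_succ, eulerWeight_zero_succ, Nat.sub_zero, Nat.add_sub_add_right,
        mul_add, sum_add_distrib, mul_sum, mul_left_comm _ (1 - c), mul_left_comm _ c]
      ring

end EulerWeight

theorem apply_lpSingle_eq_eulerWeight (c : ℂ) (E : ℓ² →L[ℂ] ℓ²)
    (hE : ∀ f (n : ℕ), E f n = ∑ k ∈ range (n + 1),
      (n.choose k : ℂ) * c ^ k * (1 - c) ^ (n - k) * f k) (j n : ℕ) :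
    E (lp.single 2 j 1) n = eulerWeight c j n := by
  rw [hE]
  simp only [lp.single_apply, Pi.single_apply, mul_ite, mul_one, mul_zero, sum_ite_eq', mem_range]
  split_ifs with h
  · rfl
  · simp [eulerWeight, Nat.choose_eq_zero_of_lt (by omega : n < j)]

section BackwardShift

variable {B : ℓ² →L[ℂ] ℓ²}

theorem backwardShift_single_zero (hB : ∀ f (n : ℕ), B f n = f (n + 1)) (a : ℂ) :
    B (lp.single 2 0 a) = 0 := by
  ext n
  simp [hB]

theorem backwardShift_single_succ (hB : ∀ f (n : ℕ), B f n = f (n + 1)) (n : ℕ) (a : ℂ) :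
    B (lp.single 2 (n + 1) a) = lp.single 2 n a := by
  ext k
  simp [hB, lp.single_apply, Pi.single_apply]

theorem apply_succ_of_one_sub_comp_eq_smul_comp (hB : ∀ f (n : ℕ), B f n = f (n + 1)) (c : ℂ)
    (X : ℓ² →L[ℂ] ℓ²) (hX : (1 - B).comp X = c • X.comp (1 - B)) (f : ℓ²) (k : ℕ) :
    X f (k + 1) = (1 - c) * X f k + c * X (B f) k := by
  have h := DFunLike.congr_fun hX f
  simp only [ContinuousLinearMap.sub_comp, ContinuousLinearMap.comp_sub, sub_apply,
    ContinuousLinearMap.comp_apply, one_apply_eq_self, smul_apply] at h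
  have := congrArg (fun g : ℓ² => (g : ℕ → ℂ) k) h
  simp only [lp.coeFn_sub, lp.coeFn_smul, Pi.sub_apply, Pi.smul_apply, smul_eq_mul, hB] at this
  linear_combination -this

end BackwardShift

theorem ContinuousLinearMap.eq_zero_of_apply_lpSingle {F : Type*} [NormedAddCommGroup F]
    [NormedSpace ℂ F] (X : ℓ² →L[ℂ] F) (hX : ∀ n, X (lp.single 2 n 1) = 0) : X = 0 := by
  refine lp.ext_continuousLinearMap (by norm_num) fun n => ?_
  ext
  simpa using hX n

theorem stmt12_general (l : ℝ)
    (B : lp (fun _ : ℕ => ℂ) 2 →L[ℂ] lp (fun _ : ℕ => ℂ) 2)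
    (hB : ∀ f (n : ℕ), B f n = f (n+1))
    (E : lp (fun _ : ℕ => ℂ) 2 →L[ℂ] lp (fun _ : ℕ => ℂ) 2)
    (hE : ∀ f (n : ℕ), E f n = ∑ k ∈ Finset.range (n+1),
      (n.choose k : ℂ) * (l:ℂ)^k * (1 - (l:ℂ))^(n-k) * f k)
    (X : lp (fun _ : ℕ => ℂ) 2 →L[ℂ] lp (fun _ : ℕ => ℂ) 2) (hX : X ≠ 0)
    (hXl : (1 - B).comp X = (l : ℂ) • (X.comp (1 - B))) :
    ∃ (n₀ : ℕ) (β : ℕ → ℂ), β 0 ≠ 0 ∧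
      (∀ n < n₀, X (lp.single 2 n (1:ℂ)) = 0) ∧
      ∀ m : ℕ, X (lp.single 2 (n₀ + m) (1:ℂ)) =
        ∑ j ∈ Finset.range (m+1), β (m - j) • E (lp.single 2 j (1:ℂ)) := by
  classical
  have hrec := apply_succ_of_one_sub_comp_eq_smul_comp hB (l : ℂ) X hXl
  have hex : ∃ n, X (lp.single 2 n 1) ≠ 0 := by
    by_contra! h
    exact hX (X.eq_zero_of_apply_lpSingle h)
  obtain ⟨n₀, hn₀, hlt⟩ : ∃ n₀, X (lp.single 2 n₀ 1) ≠ 0 ∧ ∀ n < n₀, X (lp.single 2 n 1) = 0 :=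
    ⟨Nat.find hex, Nat.find_spec hex, fun n hn => not_not.1 (Nat.find_min hex hn)⟩
  have hBn₀ : X (B (lp.single 2 n₀ 1)) = 0 := by
    cases n₀ with
    | zero => rw [backwardShift_single_zero hB, map_zero]
    | succ n => rw [backwardShift_single_succ hB, hlt n n.lt_succ_self]
  have hx := eq_sum_mul_eulerWeight (l : ℂ) (fun m k => X (lp.single 2 (n₀ + m) 1) k)
    (fun k => by simpa [hBn₀] using hrec (lp.single 2 n₀ 1) k)
    (fun m k => by
      simpa [← add_assoc, backwardShift_single_succ hB] using hrec (lp.single 2 (n₀ + m + 1) 1) k)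
  refine ⟨n₀, fun m => X (lp.single 2 (n₀ + m) 1) 0, fun h0 => hn₀ ?_, hlt, fun m => ?_⟩
  · simp only [add_zero] at h0
    ext k
    simpa [h0] using hx 0 k
  · ext k
    rw [hx m k, lp.coeFn_sum, Finset.sum_apply]
    refine sum_congr rfl fun j _ => ?_
    rw [lp.coeFn_smul, Pi.smul_apply, smul_eq_mul, apply_lpSingle_eq_eulerWeight _ E hE]

theorem stmt12 (l : ℝ) (hl0 : 0 < l) (hl1 : l ≤ 1)
    (B : lp (fun _ : ℕ => ℂ) 2 →L[ℂ] lp (fun _ : ℕ => ℂ) 2)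
    (hB : ∀ f (n : ℕ), B f n = f (n+1))
    (E : lp (fun _ : ℕ => ℂ) 2 →L[ℂ] lp (fun _ : ℕ => ℂ) 2)
    (hE : ∀ f (n : ℕ), E f n = ∑ k ∈ Finset.range (n+1),
      (n.choose k : ℂ) * (l:ℂ)^k * (1 - (l:ℂ))^(n-k) * f k)
    (X : lp (fun _ : ℕ => ℂ) 2 →L[ℂ] lp (fun _ : ℕ => ℂ) 2) (hX : X ≠ 0)
    (hXl : (1 - B).comp X = (l : ℂ) • (X.comp (1 - B))) :
    ∃ (n₀ : ℕ) (β : ℕ → ℂ), β 0 ≠ 0 ∧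
      (∀ n < n₀, X (lp.single 2 n (1:ℂ)) = 0) ∧
      ∀ m : ℕ, X (lp.single 2 (n₀ + m) (1:ℂ)) =
        ∑ j ∈ Finset.range (m+1), β (m - j) • E (lp.single 2 j (1:ℂ)) :=
  stmt12_general l B hB E hE X hX hXl
end

section
/- Let λ ∈ ℂ be such that λ is not a real number in the interval (0, 1] (i.e., it is not the case that Im λ = 0 and 0 < Re λ ≤ 1). Then there is no bounded linear operator E on ℓ²(ℕ, ℂ) satisfying (E f)(n) = Σ_{k=0}^{n} C(n,k) λ^k (1−λ)^{n−k} f(k) for all f ∈ ℓ²(ℕ, ℂ) and all n ∈ ℕ; that is, the Euler operator E_λ is unbounded. -/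
/-!
The Euler transform sends the geometric sequence `(t ^ k)` to `((1 - l + l * t) ^ n)`. As `t` runs
over the open unit disc, `1 - l + l * t` runs over the open disc of radius `‖l‖` about `1 - l`,
which contains a point of norm `≥ 1` unless `‖l‖ + ‖1 - l‖ = 1` with `l ≠ 0`, i.e. unless
`l ∈ (0, 1]`. For such `t` the input is square summable while the output is not.
-/

open Finset

theorem Complex.one_lt_norm_add_norm_one_sub {l : ℂ} (h0 : l ≠ 0)
    (hl : ¬ (l.im = 0 ∧ 0 < l.re ∧ l.re ≤ 1)) : 1 < ‖l‖ + ‖1 - l‖ := by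
  by_contra! hle
  have hre := abs_re_le_norm l
  have hre' : |1 - l.re| ≤ ‖1 - l‖ := by simpa using abs_re_le_norm (1 - l)
  have htri : 1 ≤ |l.re| + |1 - l.re| := by
    simpa using abs_add_le l.re (1 - l.re)
  have him : l.im = 0 := abs_re_eq_norm.1 (by linarith)
  have hre0 : l.re ≠ 0 := fun h => h0 (Complex.ext h him)
  refine hl ⟨him, lt_of_le_of_ne ?_ (Ne.symm hre0), ?_⟩ <;>
    linarith [le_abs_self l.re, neg_abs_le l.re, le_abs_self (1 - l.re), neg_abs_le (1 - l.re)]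

theorem Complex.exists_norm_lt_one_one_le_norm_one_sub_add_mul {l : ℂ}
    (hl : ¬ (l.im = 0 ∧ 0 < l.re ∧ l.re ≤ 1)) : ∃ t : ℂ, ‖t‖ < 1 ∧ 1 ≤ ‖1 - l + l * t‖ := by
  by_cases hB : 1 ≤ ‖1 - l‖
  · exact ⟨0, by simp, by simpa using hB⟩
  push Not at hB
  have h0 : l ≠ 0 := by rintro rfl; simp at hB
  have hsum := one_lt_norm_add_norm_one_sub h0 hl
  have hB0 : 0 < ‖1 - l‖ := norm_pos_iff.2 (sub_ne_zero.2 fun h => hl (h ▸ by norm_num))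
  -- `t` is chosen so that `1 - l + l * t` is the unit vector in the direction of `1 - l`.
  set s : ℂ := (1 - l) / ‖1 - l‖ with hs
  refine ⟨(s - (1 - l)) / l, ?_, ?_⟩
  · have hB0' : (‖1 - l‖ : ℂ) ≠ 0 := by exact_mod_cast hB0.ne'
    have hsub : s - (1 - l) = (1 - l) * ((1 - ‖1 - l‖) / ‖1 - l‖ : ℝ) := by
      rw [hs]; push_cast; field_simp
    rw [norm_div, hsub, norm_mul, Complex.norm_real, Real.norm_of_nonneg (by bound),
      mul_div_cancel₀ _ hB0.ne', div_lt_one (norm_pos_iff.2 h0)]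
    linarith
  · rw [mul_div_cancel₀ _ h0, add_sub_cancel, hs, norm_div, Complex.norm_real, norm_norm,
      div_self hB0.ne']

theorem sum_choose_mul_pow_mul_pow_mul_geometric {R : Type*} [CommSemiring R] (a b t : R) (n : ℕ) :
    ∑ k ∈ range (n + 1), (n.choose k : R) * a ^ k * b ^ (n - k) * t ^ k = (b + a * t) ^ n := by
  rw [add_comm b, add_pow]
  refine sum_congr rfl fun k _ => ?_
  ring

theorem memℓp_geometric {𝕜 : Type*} [NormedDivisionRing 𝕜] {t : 𝕜} (ht : ‖t‖ < 1)
    {p : ENNReal} (hp : 0 < p.toReal) : Memℓp (fun k : ℕ => t ^ k) p := by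
  refine memℓp_gen ?_
  simp_rw [norm_pow, ← Real.rpow_natCast, ← Real.rpow_mul (norm_nonneg t), mul_comm,
    Real.rpow_mul (norm_nonneg t), Real.rpow_natCast]
  exact summable_geometric_of_lt_one (by positivity)
    (Real.rpow_lt_one (norm_nonneg t) ht hp)

theorem not_memℓp_of_one_le_norm {α : Type*} [Infinite α] {E : α → Type*}
    [∀ i, NormedAddCommGroup (E i)] {f : ∀ i, E i} {p : ENNReal} (hp : 0 < p.toReal)
    (hf : ∀ i, 1 ≤ ‖f i‖) : ¬ Memℓp f p := fun hmem => by
  have := ((memℓp_gen_iff hp).1 hmem).tendsto_cofinite_zero.eventually_lt_const one_pos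
  obtain ⟨i, hi⟩ := this.exists
  exact hi.not_ge (Real.one_le_rpow (hf i) hp.le)

theorem stmt14 (l : ℂ) (hl : ¬ (l.im = 0 ∧ 0 < l.re ∧ l.re ≤ 1)) :
    ¬ ∃ E : lp (fun _ : ℕ => ℂ) 2 →L[ℂ] lp (fun _ : ℕ => ℂ) 2,
      ∀ f (n : ℕ), E f n = ∑ k ∈ Finset.range (n+1),
        (n.choose k : ℂ) * l^k * (1 - l)^(n-k) * f k := by
  rintro ⟨E, hE⟩
  obtain ⟨t, ht, hs⟩ := Complex.exists_norm_lt_one_one_le_norm_one_sub_add_mul hl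
  have hp : 0 < (2 : ENNReal).toReal := by norm_num
  let g : lp (fun _ : ℕ => ℂ) 2 := ⟨fun k => t ^ k, memℓp_geometric ht hp⟩
  have hEg : ⇑(E g) = fun n => (1 - l + l * t) ^ n :=
    funext fun n => (hE g n).trans (sum_choose_mul_pow_mul_pow_mul_geometric l (1 - l) t n)
  refine not_memℓp_of_one_le_norm hp (fun n => ?_) (hEg ▸ (E g).2)
  rw [norm_pow]
  exact one_le_pow₀ hs
end

section
/- Let T be a bounded linear operator on a complex Banach space E, let α ∈ ℂ, and suppose T is similar to αT, i.e., there exists an invertible bounded linear operator S on E (with bounded inverse) such that α·T = S⁻¹∘T∘S. If λ ∈ ℂ is an extended eigenvalue of T, then λα is an extended eigenvalue of T. -/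
theorem stmt15 {E : Type*} [NormedAddCommGroup E] [NormedSpace ℂ E]
    (T : E →L[ℂ] E) (α : ℂ) (S : E ≃L[ℂ] E)
    (hS : α • T = (S.symm : E →L[ℂ] E).comp (T.comp (S : E →L[ℂ] E)))
    (l : ℂ) (hl : ∃ X : E →L[ℂ] E, X ≠ 0 ∧ T.comp X = l • (X.comp T)) :
    ∃ Y : E →L[ℂ] E, Y ≠ 0 ∧ T.comp Y = (l * α) • (Y.comp T) := by
  obtain ⟨X, hX0, hX⟩ := hl
  have hTS : ∀ w, T (S w) = α • S (T w) := by
    intro w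
    have h := congrArg (fun f : E →L[ℂ] E => f w) hS
    simp only [ContinuousLinearMap.smul_apply, ContinuousLinearMap.comp_apply,
      ContinuousLinearEquiv.coe_coe] at h
    have := congrArg S h
    simpa using this.symm
  refine ⟨(S : E →L[ℂ] E).comp X, ?_, ?_⟩
  · intro h
    apply hX0
    ext v
    have := congrArg (fun f : E →L[ℂ] E => S.symm (f v)) h
    simpa using this
  · ext v
    have hx := congrArg (fun f : E →L[ℂ] E => f v) hX
    simp only [ContinuousLinearMap.smul_apply, ContinuousLinearMap.comp_apply] at hx
    simp only [ContinuousLinearMap.comp_apply, ContinuousLinearMap.smul_apply,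
      ContinuousLinearEquiv.coe_coe]
    rw [hTS, hx, map_smul, smul_smul, mul_comm]
end

section
/- Let H be a complex Hilbert space, let (e_n)_{n∈ℤ} be a Hilbert (orthonormal) basis of H indexed by the integers, let w : ℤ → ℂ be a bounded sequence of nonzero complex numbers, and let W be a bounded linear operator on H with W e_n = w_n · e_{n+1} for all n ∈ ℤ (a bilateral weighted shift). Then every λ ∈ ℂ with |λ| = 1 is an extended eigenvalue of W; that is, there exists a nonzero bounded linear operator X on H with W∘X = λ·(X∘W). -/
/-!
With respect to the basis, the operator `X e_n = λ⁻ⁿ e_n` is diagonal and, as `|λ| = 1`, bounded.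
Then `W X e_n = λ⁻ⁿ w_n e_{n+1} = λ · λ⁻⁽ⁿ⁺¹⁾ w_n e_{n+1} = λ X W e_n`, so `W X = λ X W`, and
`X e_0 = e_0` shows `X ≠ 0`.
-/

open scoped lp ENNReal

namespace HilbertBasis

variable {ι 𝕜 E F : Type*} [RCLike 𝕜] [NormedAddCommGroup E] [InnerProductSpace 𝕜 E]

theorem ext [TopologicalSpace F] [AddCommMonoid F] [Module 𝕜 F] [T2Space F]
    (e : HilbertBasis ι 𝕜 E) {f g : E →L[𝕜] F} (h : ∀ i, f (e i) = g (e i)) : f = g :=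
  ContinuousLinearMap.ext_on (Submodule.dense_iff_topologicalClosure_eq_top.mpr e.dense_span)
    (by rintro _ ⟨i, rfl⟩; exact h i)

noncomputable def diagonal (e : HilbertBasis ι 𝕜 E) (d : ℓ^∞(ι, 𝕜)) : E →L[𝕜] E :=
  (e.repr.symm : ℓ²(ι, 𝕜) →L[𝕜] E) ∘L
    lp.mapCLM 2 (fun i => ContinuousLinearMap.toSpanSingleton 𝕜 (d i)) (norm_nonneg d)
      (fun i => (ContinuousLinearMap.norm_toSpanSingleton _).trans_le
        (lp.norm_apply_le_norm ENNReal.top_ne_zero d i)) ∘L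
    (e.repr : E →L[𝕜] ℓ²(ι, 𝕜))

theorem diagonal_apply_self (e : HilbertBasis ι 𝕜 E) (d : ℓ^∞(ι, 𝕜)) (i : ι) :
    e.diagonal d (e i) = d i • e i := by
  classical
  simp only [diagonal, ContinuousLinearMap.comp_apply, ContinuousLinearEquiv.coe_coe,
    LinearIsometryEquiv.coe_toContinuousLinearEquiv, e.repr_self]
  rw [← e.repr_symm_single, ← map_smul]
  congr 1
  ext j
  rcases eq_or_ne j i with rfl | hj
  · simp
  · simp [Pi.single_eq_of_ne hj]

end HilbertBasis

theorem weightedShift_comp_diagonal {𝕜 E : Type*} [RCLike 𝕜] [NormedAddCommGroup E]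
    [InnerProductSpace 𝕜 E] (e : HilbertBasis ℤ 𝕜 E) (w : ℤ → 𝕜) (W : E →L[𝕜] E)
    (hW : ∀ n, W (e n) = w n • e (n + 1)) (c : 𝕜) (d : ℓ^∞(ℤ, 𝕜))
    (hd : ∀ n, d n = c * d (n + 1)) :
    W ∘L e.diagonal d = c • (e.diagonal d ∘L W) := by
  refine e.ext fun n => ?_
  simp only [ContinuousLinearMap.comp_apply, smul_apply,
    e.diagonal_apply_self, hW, map_smul, smul_smul, hd n]
  ring_nf

theorem stmt16_general {H : Type*} [NormedAddCommGroup H] [InnerProductSpace ℂ H]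
    (e : HilbertBasis ℤ ℂ H) (w : ℤ → ℂ)
    (W : H →L[ℂ] H) (hW : ∀ n : ℤ, W (e n) = w n • e (n + 1))
    (l : ℂ) (hl : ‖l‖ = 1) :
    ∃ X : H →L[ℂ] H, X ≠ 0 ∧ W.comp X = l • (X.comp W) := by
  have hl0 : l ≠ 0 := norm_ne_zero_iff.mp (hl ▸ one_ne_zero)
  let d : ℓ^∞(ℤ, ℂ) := ⟨fun n => l ^ (-n), memℓp_infty ⟨1, by rintro _ ⟨n, rfl⟩; simp [hl]⟩⟩
  refine ⟨e.diagonal d, fun h => ?_, weightedShift_comp_diagonal e w W hW l d fun n => ?_⟩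
  · have h0 := e.diagonal_apply_self d 0
    simp only [h, zero_apply] at h0
    simpa [d, e.orthonormal.1 0] using congrArg norm h0
  · change l ^ (-n) = l * l ^ (-(n + 1))
    rw [show -n = -(n + 1) + 1 by ring, zpow_add_one₀ hl0, mul_comm]

theorem stmt16 {H : Type*} [NormedAddCommGroup H] [InnerProductSpace ℂ H]
    [CompleteSpace H]
    (e : HilbertBasis ℤ ℂ H) (w : ℤ → ℂ) (hw : ∀ n, w n ≠ 0)
    (hwbdd : ∃ M : ℝ, ∀ n, ‖w n‖ ≤ M)
    (W : H →L[ℂ] H) (hW : ∀ n : ℤ, W (e n) = w n • e (n + 1))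
    (l : ℂ) (hl : ‖l‖ = 1) :
    ∃ X : H →L[ℂ] H, X ≠ 0 ∧ W.comp X = l • (X.comp W) :=
  stmt16_general e w W hW l hl
end

section
/- Let H be a complex Hilbert space, let (e_n)_{n∈ℤ} be a Hilbert (orthonormal) basis of H, and let U be a bounded linear operator on H with U e_n = e_{n+1} for all n ∈ ℤ (a bilateral shift of multiplicity one). Let λ ∈ ℂ with λ ≠ 1. If X is a bounded linear operator on H satisfying (I − U*)∘X = λ·(X∘(I − U*)), where U* denotes the Hilbert-space adjoint of U, then X = 0. (Consequently, the only extended eigenvalue of I − U* is 1.) -/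
/-!
Via the Fourier basis, `H` is identified with `L²(ℝ/ℤ)` so that `U*` becomes multiplication by
`z̄ = e^{-2πix}`. Evaluated at `eₙ`, the relation `(1 - U*) X = l X (1 - U*)` becomes the
recurrence `l φₙ₋₁ = (z̄ - (1 - l)) φₙ` for the images `φₙ` of `X eₙ`, all of `L²` norm at most
`‖X‖`. Iterating, `|l|ᵏ |φₙ₋ₖ| = |z̄ - (1 - l)|ᵏ |φₙ|`, so letting `k → ∞` the function `φₙ`
vanishes wherever `|z̄ - (1 - l)| > |l|`, and symmetrically (using `φₙ₊ₖ`) wherever it is `< |l|`.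
As `1 - l ≠ 0`, the circles `|z| = 1` and `|z - (1 - l)| = |l|` meet in at most two points,
so `φₙ = 0` almost everywhere.
-/

open MeasureTheory Filter Set AddCircle
open scoped ENNReal ComplexConjugate

namespace MeasureTheory

variable {X E : Type*} [MeasurableSpace X] {μ : Measure X} [NormedAddCommGroup E] {p : ℝ≥0∞}

theorem ae_eq_zero_of_forall_le_pow_mul (hp : p ≠ 0) {q : ℝ} (hq₀ : 0 ≤ q) (hq₁ : q < 1)
    {ψ : X → E} (hψ : AEStronglyMeasurable ψ μ) {ψs : ℕ → X → E} {C : ℝ≥0∞} (hC : C ≠ ∞)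
    (hbound : ∀ k, eLpNorm (ψs k) p μ ≤ C) (hle : ∀ k, ∀ᵐ x ∂μ, ‖ψ x‖ ≤ q ^ k * ‖ψs k x‖) :
    ψ =ᵐ[μ] 0 := by
  refine (eLpNorm_eq_zero_iff hψ hp).1 (le_antisymm ?_ bot_le)
  have hlim : Tendsto (fun k : ℕ => ENNReal.ofReal (q ^ k) * C) atTop (nhds 0) := by
    simpa using ENNReal.Tendsto.mul_const (ENNReal.tendsto_ofReal
      (tendsto_pow_atTop_nhds_zero_of_lt_one hq₀ hq₁)) (Or.inr hC)
  exact ge_of_tendsto' hlim fun k =>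
    (eLpNorm_le_mul_eLpNorm_of_ae_le_mul (hle k) p).trans (by gcongr; exact hbound k)

theorem ae_eq_zero_of_lt_mul_of_pow_mul_le (hp : p ≠ 0) {q : ℝ} (hq₀ : 0 ≤ q) (hq₁ : q < 1)
    {α β : X → ℝ} (hα : AEMeasurable α μ) (hβ : AEMeasurable β μ) (hα₀ : ∀ x, 0 ≤ α x)
    {ψ : X → E} (hψ : AEStronglyMeasurable ψ μ) {ψs : ℕ → X → E} {C : ℝ≥0∞} (hC : C ≠ ∞)
    (hbound : ∀ k, eLpNorm (ψs k) p μ ≤ C)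
    (hle : ∀ k, ∀ᵐ x ∂μ, β x ^ k * ‖ψ x‖ ≤ α x ^ k * ‖ψs k x‖) :
    ∀ᵐ x ∂μ, α x < q * β x → ψ x = 0 := by
  set S := {x | α x < q * β x}
  have hS : NullMeasurableSet S μ := nullMeasurableSet_lt hα (hβ.const_mul q)
  have hzero : S.indicator ψ =ᵐ[μ] 0 := by
    refine ae_eq_zero_of_forall_le_pow_mul hp hq₀ hq₁ (hψ.indicator₀ hS) hC hbound fun k => ?_
    filter_upwards [hle k] with x hx
    by_cases hxS : x ∈ S
    · have hβ₀ : 0 < β x := by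
        have := hα₀ x; have : α x < q * β x := hxS; nlinarith
      rw [indicator_of_mem hxS]
      refine le_of_mul_le_mul_left ?_ (pow_pos hβ₀ k)
      calc β x ^ k * ‖ψ x‖ ≤ α x ^ k * ‖ψs k x‖ := hx
        _ ≤ (q * β x) ^ k * ‖ψs k x‖ := by gcongr; exacts [hα₀ x, hxS.le]
        _ = β x ^ k * (q ^ k * ‖ψs k x‖) := by ring
    · rw [indicator_of_notMem hxS, norm_zero]
      positivity
  filter_upwards [hzero] with x hx hxS
  simpa [indicator_of_mem (show x ∈ S from hxS)] using hx

theorem ae_eq_zero_of_lt_of_pow_mul_le (hp : p ≠ 0)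
    {α β : X → ℝ} (hα : AEMeasurable α μ) (hβ : AEMeasurable β μ) (hα₀ : ∀ x, 0 ≤ α x)
    {ψ : X → E} (hψ : AEStronglyMeasurable ψ μ) {ψs : ℕ → X → E} {C : ℝ≥0∞} (hC : C ≠ ∞)
    (hbound : ∀ k, eLpNorm (ψs k) p μ ≤ C)
    (hle : ∀ k, ∀ᵐ x ∂μ, β x ^ k * ‖ψ x‖ ≤ α x ^ k * ‖ψs k x‖) :
    ∀ᵐ x ∂μ, α x < β x → ψ x = 0 := by
  have hq : ∀ j : ℕ, ∀ᵐ x ∂μ, α x < (1 - 1 / (j + 1)) * β x → ψ x = 0 := fun j =>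
    ae_eq_zero_of_lt_mul_of_pow_mul_le hp
      (sub_nonneg.2 (div_le_one_of_le₀ (by simp) (by positivity)))
      (sub_lt_self _ Nat.one_div_pos_of_nat) hα hβ hα₀ hψ hC hbound hle
  filter_upwards [ae_all_iff.2 hq] with x hx hlt
  have hβ₀ : 0 < β x := (hα₀ x).trans_lt hlt
  obtain ⟨j, hj⟩ := exists_nat_one_div_lt (sub_pos.2 ((div_lt_one hβ₀).2 hlt))
  refine hx j ?_
  rw [sub_mul, one_mul, lt_sub_comm]
  calc 1 / (j + 1 : ℝ) * β x < (1 - α x / β x) * β x := by gcongr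
    _ = β x - α x := by field_simp

variable {𝕜 : Type*} [NormedField 𝕜] [NormedSpace 𝕜 E]

theorem pow_smul_sub_ae_eq_pow_smul {a b : X → 𝕜} {φ : ℤ → X → E}
    (hrec : ∀ n, a • φ (n - 1) =ᵐ[μ] b • φ n) (k : ℕ) (n : ℤ) :
    a ^ k • φ (n - k) =ᵐ[μ] b ^ k • φ n := by
  induction k generalizing n with
  | zero => simp
  | succ k ih =>
    filter_upwards [hrec (n - k), ih n] with x hx hk
    simp only [Pi.smul_apply', Pi.pow_apply, Nat.cast_succ, sub_add_eq_sub_sub] at hx hk ⊢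
    rw [pow_succ', mul_smul, smul_comm, hx, smul_comm, hk, ← mul_smul, ← pow_succ']

theorem ae_eq_zero_of_smul_sub_one_ae_eq_smul (hp : p ≠ 0) {a b : X → 𝕜}
    (ha : AEStronglyMeasurable a μ) (hb : AEStronglyMeasurable b μ) (hab : ∀ᵐ x ∂μ, ‖a x‖ ≠ ‖b x‖)
    {φ : ℤ → X → E} (hφ : ∀ n, AEStronglyMeasurable (φ n) μ) {C : ℝ≥0∞} (hC : C ≠ ∞)
    (hbound : ∀ n, eLpNorm (φ n) p μ ≤ C) (hrec : ∀ n, a • φ (n - 1) =ᵐ[μ] b • φ n) (n : ℤ) :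
    φ n =ᵐ[μ] 0 := by
  have hnorm : ∀ (k : ℕ) (m : ℤ), ∀ᵐ x ∂μ, ‖b x‖ ^ k * ‖φ m x‖ = ‖a x‖ ^ k * ‖φ (m - k) x‖ :=
    fun k m => by
      filter_upwards [pow_smul_sub_ae_eq_pow_smul hrec k m] with x hx
      simpa [norm_smul, eq_comm] using congrArg norm hx
  have hgt := ae_eq_zero_of_lt_of_pow_mul_le hp ha.norm.aemeasurable hb.norm.aemeasurable
    (fun x => norm_nonneg _) (hφ n) hC (fun k => hbound (n - k))
    fun k => (hnorm k n).mono fun x hx => hx.le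
  have hlt := ae_eq_zero_of_lt_of_pow_mul_le hp hb.norm.aemeasurable ha.norm.aemeasurable
    (fun x => norm_nonneg _) (hφ n) hC (fun k => hbound (n + k))
    fun k => (hnorm k (n + k)).mono fun x hx => by simpa using hx.ge
  filter_upwards [hab, hgt, hlt] with x hx h₁ h₂
  exact hx.lt_or_gt.elim h₁ h₂

theorem Lp.eq_zero_of_smul_sub_one_ae_eq_smul (hp : p ≠ 0) {a b : X → 𝕜}
    (ha : AEStronglyMeasurable a μ) (hb : AEStronglyMeasurable b μ) (hab : ∀ᵐ x ∂μ, ‖a x‖ ≠ ‖b x‖)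
    {φ : ℤ → Lp E p μ} {C : ℝ≥0∞} (hC : C ≠ ∞) (hbound : ∀ n, ‖φ n‖ₑ ≤ C)
    (hrec : ∀ n, a • ⇑(φ (n - 1)) =ᵐ[μ] b • ⇑(φ n)) (n : ℤ) : φ n = 0 := by
  refine Lp.ext ((ae_eq_zero_of_smul_sub_one_ae_eq_smul hp ha hb hab
    (fun n => Lp.aestronglyMeasurable (φ n)) hC (fun n => ?_) hrec n).trans
    (Lp.coeFn_zero E p μ).symm)
  exact Lp.enorm_def (φ n) ▸ hbound n

end MeasureTheory

theorem Circle.finite_setOf_norm_sub_eq {w : ℂ} (hw : w ≠ 0) (r : ℝ) :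
    {z : Circle | ‖(z : ℂ) - w‖ = r}.Finite := by
  -- on the unit circle `conj z = z⁻¹`, so `|z - w|² = r²` becomes a quadratic equation in `z`
  set P : Polynomial ℂ := .C (conj w) * .X ^ 2 - .C (1 + ‖w‖ ^ 2 - r ^ 2 : ℂ) * .X + .C w
  have hP : P ≠ 0 := fun h => hw (by simpa [P] using congrArg (Polynomial.eval 0) h)
  refine ((Polynomial.finite_setOfPred_isRoot hP).preimage Circle.coe_injective.injOn).subset ?_
  intro (z : Circle) hz
  have hz1 : (z : ℂ) * conj (z : ℂ) = 1 := by simp [Complex.mul_conj]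
  have hzw : ((z : ℂ) - w) * (conj (z : ℂ) - conj w) = r ^ 2 := by
    rw [← map_sub, Complex.mul_conj, Complex.normSq_eq_norm_sq, hz.out]; push_cast; ring
  have hw2 : (‖w‖ ^ 2 : ℂ) = w * conj w := by
    rw [Complex.mul_conj, Complex.normSq_eq_norm_sq]; push_cast; ring
  show P.IsRoot (z : ℂ)
  simp only [Polynomial.IsRoot.def, P, Polynomial.eval_add, Polynomial.eval_sub,
    Polynomial.eval_mul, Polynomial.eval_pow, Polynomial.eval_C, Polynomial.eval_X]
  rw [hw2]
  linear_combination (-(z : ℂ)) * hzw + ((z : ℂ) - w) * hz1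

theorem HilbertBasis.adjoint_apply_of_apply_eq_add {𝕜 E : Type*} [RCLike 𝕜]
    [NormedAddCommGroup E] [InnerProductSpace 𝕜 E] [CompleteSpace E] (e : HilbertBasis ℤ 𝕜 E)
    {V : E →L[𝕜] E} {m : ℤ} (hV : ∀ n, V (e n) = e (n + m)) (n : ℤ) :
    ContinuousLinearMap.adjoint V (e n) = e (n - m) := by
  refine e.repr.injective (lp.ext (funext fun k => ?_))
  simp only [e.repr_apply_apply, ContinuousLinearMap.adjoint_inner_right, hV,
    orthonormal_iff_ite.1 e.orthonormal, eq_sub_iff_add_eq]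

section Fourier

variable {T : ℝ} [hT : Fact (0 < T)]

namespace AddCircle

-- makes Haar measure on `AddCircle T` atomless, via `IsHaarMeasure.nullSingletonClass`
instance nontrivial : Nontrivial (AddCircle T) :=
  ⟨⟨((T / 2 : ℝ) : AddCircle T), 0, fun h => (half_pos hT.out).ne'
    ((coe_eq_zero_iff_of_mem_Ico ⟨(half_pos hT.out).le, half_lt_self hT.out⟩).1 h)⟩⟩

theorem fourier_neg_one_injective : Function.Injective (fourier (-1) : AddCircle T → ℂ) := by
  intro x y h
  simp only [fourier_apply, neg_smul, one_smul] at h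
  exact neg_injective (injective_toCircle hT.out.ne' (Subtype.coe_injective h))

theorem ae_norm_fourier_neg_one_sub_ne {w : ℂ} (hw : w ≠ 0) (r : ℝ) :
    ∀ᵐ x ∂(haarAddCircle : Measure (AddCircle T)), ‖fourier (-1) x - w‖ ≠ r := by
  have hfin : {x : AddCircle T | ‖fourier (-1) x - w‖ = r}.Finite :=
    (Circle.finite_setOf_norm_sub_eq hw r).preimage fun x _ y _ h =>
      fourier_neg_one_injective (congrArg ((↑) : Circle → ℂ) h)
  exact measure_eq_zero_iff_ae_notMem.1 (hfin.measure_zero _)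

end AddCircle

namespace HilbertBasis

variable {H : Type*} [NormedAddCommGroup H] [InnerProductSpace ℂ H]

noncomputable def toFourierLp (e : HilbertBasis ℤ ℂ H) :
    H ≃ₗᵢ[ℂ] Lp ℂ 2 (haarAddCircle (T := T)) :=
  e.repr.trans fourierBasis.repr.symm

theorem toFourierLp_apply_self (e : HilbertBasis ℤ ℂ H) (n : ℤ) :
    e.toFourierLp (T := T) (e n) = fourierLp 2 n := by
  classical
  rw [toFourierLp, LinearIsometryEquiv.trans_apply, e.repr_self, fourierBasis.repr_symm_single,
    coe_fourierBasis]

theorem coeFn_toFourierLp_of_apply_eq_add (e : HilbertBasis ℤ ℂ H) {V : H →L[ℂ] H} {m : ℤ}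
    (hV : ∀ n, V (e n) = e (n + m)) (v : H) :
    ⇑(e.toFourierLp (T := T) (V v)) =ᵐ[haarAddCircle]
      fun x : AddCircle T => fourier m x * e.toFourierLp v x := by
  set Φ : H →L[ℂ] Lp ℂ 2 (haarAddCircle (T := T)) :=
    (e.toFourierLp (T := T)).toContinuousLinearEquiv.toContinuousLinearMap
  set M := (ContinuousLinearMap.mul ℂ ℂ).holderL haarAddCircle ⊤ 2 2 (fourierLp (T := T) ⊤ m)
  have hM : ∀ f, ⇑(M f) =ᵐ[haarAddCircle] fun x => fourier m x * f x := fun f => by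
    filter_upwards [ContinuousLinearMap.coeFn_holder (r := 2) (ContinuousLinearMap.mul ℂ ℂ)
      (fourierLp (T := T) ⊤ m) f, coeFn_fourierLp (T := T) ⊤ m] with x h₁ h₂
    simp only [M, ContinuousLinearMap.holderL_apply_apply, h₁, h₂,
      ContinuousLinearMap.mul_apply']
  have hcomm : Φ ∘L V = M ∘L Φ := by
    refine ContinuousLinearMap.ext_on
      (Submodule.dense_iff_topologicalClosure_eq_top.2 e.dense_span) ?_
    rintro _ ⟨n, rfl⟩
    simp only [ContinuousLinearMap.comp_apply, hV, Φ, ContinuousLinearEquiv.coe_coe,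
      LinearIsometryEquiv.coe_toContinuousLinearEquiv, toFourierLp_apply_self]
    refine Lp.ext ?_
    filter_upwards [coeFn_fourierLp (T := T) 2 (n + m), hM (fourierLp 2 n),
      coeFn_fourierLp (T := T) 2 n] with x h₁ h₂ h₃
    rw [h₁, h₂, h₃, add_comm, fourier_add]
  change ⇑(Φ (V v)) =ᵐ[_] fun x => fourier m x * Φ v x
  rw [← ContinuousLinearMap.comp_apply, hcomm]
  exact hM (Φ v)

theorem coeFn_toFourierLp_sub_smul_of_apply_eq_add (e : HilbertBasis ℤ ℂ H) {V : H →L[ℂ] H}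
    {m : ℤ} (hV : ∀ n, V (e n) = e (n + m)) (d : ℂ) (v : H) :
    ⇑(e.toFourierLp (T := T) (V v - d • v)) =ᵐ[haarAddCircle]
      (fun x : AddCircle T => fourier m x - d) • ⇑(e.toFourierLp v) := by
  rw [map_sub, map_smul]
  filter_upwards [Lp.coeFn_sub (e.toFourierLp (T := T) (V v)) (d • e.toFourierLp v),
    Lp.coeFn_smul d (e.toFourierLp (T := T) v), e.coeFn_toFourierLp_of_apply_eq_add hV v]
    with x h₁ h₂ h₃
  simp only [h₁, h₂, h₃, Pi.sub_apply, Pi.smul_apply, Pi.smul_apply', smul_eq_mul]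
  ring

theorem toFourierLp_pred_ae_eq_of_one_sub_comp_eq (e : HilbertBasis ℤ ℂ H) {V X : H →L[ℂ] H}
    (hV : ∀ n, V (e n) = e (n + -1)) {l : ℂ} (hX : (1 - V) ∘L X = l • (X ∘L (1 - V))) (n : ℤ) :
    (fun _ : AddCircle T => l) • ⇑(e.toFourierLp (T := T) (X (e (n - 1)))) =ᵐ[haarAddCircle]
      (fun x : AddCircle T => fourier (-1) x - (1 - l)) • ⇑(e.toFourierLp (X (e n))) := by
  have hXe : l • X (e (n - 1)) = V (X (e n)) - (1 - l) • X (e n) := by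
    have h := DFunLike.congr_fun hX (e n)
    simp [hV, ← sub_eq_add_neg] at h
    linear_combination (norm := module) h
  have h := e.coeFn_toFourierLp_sub_smul_of_apply_eq_add (T := T) hV (1 - l) (X (e n))
  rw [← hXe, map_smul] at h
  exact (Lp.coeFn_smul l _).symm.trans h

end HilbertBasis

end Fourier

theorem stmt18 {H : Type*} [NormedAddCommGroup H] [InnerProductSpace ℂ H]
    [CompleteSpace H]
    (e : HilbertBasis ℤ ℂ H)
    (U : H →L[ℂ] H) (hU : ∀ n : ℤ, U (e n) = e (n + 1))
    (l : ℂ) (hl : l ≠ 1)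
    (X : H →L[ℂ] H)
    (hX : (1 - ContinuousLinearMap.adjoint U).comp X =
        l • (X.comp (1 - ContinuousLinearMap.adjoint U))) :
    X = 0 := by
  have : Fact ((0 : ℝ) < 1) := ⟨one_pos⟩
  set V := ContinuousLinearMap.adjoint U
  have hV : ∀ n, V (e n) = e (n + -1) := fun n => by
    rw [e.adjoint_apply_of_apply_eq_add hU, sub_eq_add_neg]
  set Φ := e.toFourierLp (T := 1)
  have hnull : ∀ᵐ x : AddCircle (1 : ℝ) ∂haarAddCircle, ‖l‖ ≠ ‖fourier (-1) x - (1 - l)‖ :=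
    (ae_norm_fourier_neg_one_sub_ne (sub_ne_zero.2 hl.symm) ‖l‖).mono fun _ hx => hx.symm
  have hbound : ∀ n, ‖Φ (X (e n))‖ₑ ≤ ‖X‖ₑ := fun n => by
    simpa [Φ.enorm_map, ← ofReal_norm, e.orthonormal.1 n] using X.le_opENorm (e n)
  have hzero : ∀ n, X (e n) = 0 := fun n => Φ.map_eq_zero_iff.1 <|
    Lp.eq_zero_of_smul_sub_one_ae_eq_smul two_ne_zero aestronglyMeasurable_const
      (by fun_prop) hnull enorm_ne_top hbound (e.toFourierLp_pred_ae_eq_of_one_sub_comp_eq hV hX)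
      n
  exact ContinuousLinearMap.ext_on (Submodule.dense_iff_topologicalClosure_eq_top.2 e.dense_span)
    (by rintro _ ⟨n, rfl⟩; simp [hzero n])
end
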